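/- Let T be a bounded operator on H that has Toeplitz matrix with coefficient sequence c : ℤ → ℂ. For w in the open unit disc 𝔻 let ẽ_w ∈ H be the sequence n ↦ (1 − |w|²)·conj(w)^{n−1} (the coefficient vector of the normalized kernel Ẽ_w). Then ẽ_w is a unit vector in H and ⟨T ẽ_w, ẽ_w⟩ = w·(1 − |w|²)·Σ_{k≥1} k·c(k)·w^{k−1} + Σ_{k≥1} c(k)·w^k + Σ_{k≥0} c(−k)·conj(w)^k, all series being absolutely convergent. -/

import Mathlib

open scoped ComplexConjugate

local notation "⟪" x ", " y "⟫" => @inner ℂ _ _ x y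

/-- The coefficient vector of the normalized kernel `Ẽ_w` in the coefficient model of the
Dirichlet space: the sequence `n ↦ (1 − |w|²)·conj(w)^(n−1)` (for `n ≥ 1`), i.e.
`ẽ_w = ∑_{n ≥ 1} (1 − |w|²)·conj(w)^(n−1) • e n`. -/
noncomputable def etilde {H : Type*} [NormedAddCommGroup H] [InnerProductSpace ℂ H]
    (e : ℕ → H) (w : ℂ) : H :=
  ∑' n : ℕ, ((((1 - ‖w‖ ^ 2 : ℝ) : ℂ)) * (conj w) ^ n) • e (n + 1)

/-!
Writing `ẽ_w = ∑ aₙ e (n + 1)` with `aₙ = (1 - |w|²) conj(w)ⁿ`, the quantity `⟪ẽ_w, T ẽ_w⟫` is the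
absolutely convergent double series `∑ conj(aₘ) aₙ (m + 1) c(m - n)` over the matrix of `T`
(the bound `|c(m - n)| ≤ ‖T‖ (n + 1)` comes from `‖e (n + 1)‖² = n + 1`). Summing it along the
diagonals `m - n = const`, each diagonal is a series `∑ (n + a) |w|²ⁿ`, whose closed form
cancels the factor `(1 - |w|²)²`. The identity has Toeplitz matrix `δ₀`, so the same formula gives
`‖ẽ_w‖ = 1`.
-/

theorem hasSum_natCast_add_mul_geometric {𝕜 : Type*} [NormedField 𝕜] [CompleteSpace 𝕜]
    (a : 𝕜) {r : 𝕜} (hr : ‖r‖ < 1) :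
    HasSum (fun n : ℕ => ((n : 𝕜) + a) * r ^ n) (r / (1 - r) ^ 2 + a / (1 - r)) := by
  simp only [add_mul, div_eq_mul_inv a]
  exact (hasSum_coe_mul_geometric_of_norm_lt_one hr).add
    ((hasSum_geometric_of_norm_lt_one hr).mul_left a)

theorem summable_natCast_add_one_mul_pow {r : ℝ} (hr0 : 0 ≤ r) (hr : r < 1) :
    Summable fun n : ℕ => ((n : ℝ) + 1) * r ^ n :=
  (hasSum_natCast_add_mul_geometric 1 (by rwa [Real.norm_of_nonneg hr0])).summable

def belowAboveDiagonalEquiv : (ℕ × ℕ) ⊕ (ℕ × ℕ) ≃ ℕ × ℕ where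
  toFun := Sum.elim (fun p => (p.2 + p.1 + 1, p.2)) (fun p => (p.2, p.2 + p.1))
  invFun p := if p.2 < p.1 then .inl (p.1 - p.2 - 1, p.2) else .inr (p.2 - p.1, p.1)
  left_inv := by
    rintro (⟨k, n⟩ | ⟨j, m⟩)
    · dsimp only [Sum.elim_inl]
      rw [if_pos (by omega)]
      congr 2
      omega
    · dsimp only [Sum.elim_inr]
      rw [if_neg (by omega)]
      congr 2
      omega
  right_inv := by
    rintro ⟨m, n⟩
    dsimp only
    split_ifs
    · dsimp only [Sum.elim_inl]
      congr 1
      omega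
    · dsimp only [Sum.elim_inr]
      congr 1
      omega

theorem tsum_tsum_eq_tsum_below_diagonal_add_tsum_above_diagonal {E : Type*}
    [NormedAddCommGroup E] [CompleteSpace E] {F : ℕ × ℕ → E} (hF : Summable F) :
    ∑' m, ∑' n, F (m, n) = ∑' k, ∑' n, F (n + k + 1, n) + ∑' j, ∑' m, F (m, m + j) := by
  have hsplit : Summable (F ∘ belowAboveDiagonalEquiv) :=
    belowAboveDiagonalEquiv.summable_iff.mpr hF
  have hbelow : Summable fun p : ℕ × ℕ => F (p.2 + p.1 + 1, p.2) :=
    hsplit.comp_injective (i := Sum.inl) Sum.inl_injective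
  have habove : Summable fun p : ℕ × ℕ => F (p.2, p.2 + p.1) :=
    hsplit.comp_injective (i := Sum.inr) Sum.inr_injective
  calc ∑' m, ∑' n, F (m, n) = ∑' p, F p := (hF.tsum_prod' fun m => hF.prod_factor m).symm
    _ = ∑' q, F (belowAboveDiagonalEquiv q) := (belowAboveDiagonalEquiv.tsum_eq F).symm
    _ = ∑' p : ℕ × ℕ, F (p.2 + p.1 + 1, p.2) + ∑' p : ℕ × ℕ, F (p.2, p.2 + p.1) :=
        Summable.tsum_sum hbelow habove
    _ = _ := by
        rw [hbelow.tsum_prod' fun k => hbelow.prod_factor k,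
          habove.tsum_prod' fun j => habove.prod_factor j]

theorem inner_tsum_apply_tsum {H ι κ : Type*} [NormedAddCommGroup H] [InnerProductSpace ℂ H]
    (T : H →L[ℂ] H) {x : ι → H} {y : κ → H} (hx : Summable x) (hy : Summable y) :
    ⟪∑' i, x i, T (∑' j, y j)⟫ = ∑' i, ∑' j, ⟪x i, T (y j)⟫ := by
  rw [T.map_tsum hy]
  have hTy : Summable fun j => T (y j) := hy.mapL T
  calc ⟪∑' i, x i, ∑' j, T (y j)⟫ = ∑' i, ⟪x i, ∑' j, T (y j)⟫ :=
        (innerSLFlip ℂ (∑' j, T (y j))).map_tsum hx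
    _ = ∑' i, ∑' j, ⟪x i, T (y j)⟫ := tsum_congr fun i => (innerSL ℂ (x i)).map_tsum hTy

theorem norm_le_of_inner_self_eq {H : Type*} [NormedAddCommGroup H] [InnerProductSpace ℂ H]
    {v : H} {t : ℝ} (hv : ⟪v, v⟫ = t) (ht : 1 ≤ t) : ‖v‖ ≤ t := by
  have hsq : ‖v‖ ^ 2 = t :=
    Complex.ofReal_injective (by push_cast; exact (inner_self_eq_norm_sq_to_K v).symm.trans hv)
  nlinarith [norm_nonneg v]

theorem norm_mul_conj_lt_one {w : ℂ} (hw : ‖w‖ < 1) : ‖w * conj w‖ < 1 := by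
  rw [norm_mul, Complex.norm_conj]
  nlinarith [norm_nonneg w]

theorem one_sub_mul_conj_ne_zero {w : ℂ} (hw : ‖w‖ < 1) : 1 - w * conj w ≠ 0 := by
  have hx := norm_mul_conj_lt_one hw
  exact sub_ne_zero.mpr fun h => by simp [← h] at hx

noncomputable def kernelCoeff (w : ℂ) (n : ℕ) : ℂ := ((1 - ‖w‖ ^ 2 : ℝ) : ℂ) * conj w ^ n

theorem ofReal_one_sub_norm_sq (w : ℂ) : (((1 - ‖w‖ ^ 2 : ℝ)) : ℂ) = 1 - w * conj w := by
  rw [Complex.mul_conj, Complex.normSq_eq_norm_sq]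
  push_cast
  rfl

theorem kernelCoeff_eq (w : ℂ) (n : ℕ) : kernelCoeff w n = (1 - w * conj w) * conj w ^ n := by
  rw [kernelCoeff, ofReal_one_sub_norm_sq]

theorem conj_kernelCoeff (w : ℂ) (n : ℕ) : conj (kernelCoeff w n) = (1 - w * conj w) * w ^ n := by
  rw [kernelCoeff_eq, map_mul, map_sub, map_one, map_mul, map_pow, Complex.conj_conj, mul_comm w]

theorem norm_kernelCoeff_le {w : ℂ} (hw : ‖w‖ ≤ 1) (n : ℕ) : ‖kernelCoeff w n‖ ≤ ‖w‖ ^ n := by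
  rw [kernelCoeff, norm_mul, norm_pow, Complex.norm_conj, Complex.norm_real,
    Real.norm_of_nonneg (by nlinarith [norm_nonneg w])]
  have : 0 ≤ ‖w‖ ^ n := by positivity
  nlinarith [sq_nonneg ‖w‖]

noncomputable def berezinTerm (c : ℤ → ℂ) (w : ℂ) (p : ℕ × ℕ) : ℂ :=
  conj (kernelCoeff w p.1) * kernelCoeff w p.2 * (((p.1 : ℂ) + 1) * c ((p.1 : ℤ) - p.2))

theorem tsum_berezinTerm_below_diagonal (c : ℤ → ℂ) {w : ℂ} (hw : ‖w‖ < 1) (k : ℕ) :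
    ∑' n, berezinTerm c w (n + k + 1, n)
      = ((1 - ‖w‖ ^ 2 : ℝ) : ℂ) * w * (((k : ℂ) + 1) * c ((k : ℤ) + 1) * w ^ k)
        + c ((k : ℤ) + 1) * w ^ (k + 1) := by
  set x := w * conj w
  have hx : ‖x‖ < 1 := norm_mul_conj_lt_one hw
  have hx1 : 1 - x ≠ 0 := one_sub_mul_conj_ne_zero hw
  have hterm : ∀ n : ℕ, berezinTerm c w (n + k + 1, n)
      = (1 - x) ^ 2 * w ^ (k + 1) * c ((k : ℤ) + 1) * (((n : ℂ) + ((k : ℂ) + 2)) * x ^ n) := by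
    intro n
    have hidx : ((n + k + 1 : ℕ) : ℤ) - (n : ℤ) = (k : ℤ) + 1 := by push_cast; ring
    rw [berezinTerm, conj_kernelCoeff, kernelCoeff_eq, hidx]
    push_cast
    ring
  rw [tsum_congr hterm, tsum_mul_left, (hasSum_natCast_add_mul_geometric _ hx).tsum_eq,
    ofReal_one_sub_norm_sq]
  field_simp
  ring

theorem tsum_berezinTerm_above_diagonal (c : ℤ → ℂ) {w : ℂ} (hw : ‖w‖ < 1) (j : ℕ) :
    ∑' m, berezinTerm c w (m, m + j) = c (-(j : ℤ)) * conj w ^ j := by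
  set x := w * conj w
  have hx : ‖x‖ < 1 := norm_mul_conj_lt_one hw
  have hx1 : 1 - x ≠ 0 := one_sub_mul_conj_ne_zero hw
  have hterm : ∀ m : ℕ, berezinTerm c w (m, m + j)
      = (1 - x) ^ 2 * c (-(j : ℤ)) * conj w ^ j * (((m : ℂ) + 1) * x ^ m) := by
    intro m
    have hidx : (m : ℤ) - ((m + j : ℕ) : ℤ) = -(j : ℤ) := by push_cast; ring
    rw [berezinTerm, conj_kernelCoeff, kernelCoeff_eq, hidx]
    ring
  rw [tsum_congr hterm, tsum_mul_left, (hasSum_natCast_add_mul_geometric _ hx).tsum_eq]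
  field_simp
  ring

section ToeplitzMatrix

variable {H : Type*} [NormedAddCommGroup H] [InnerProductSpace ℂ H]

def IsDirichletOrthogonal (e : ℕ → H) : Prop :=
  ∀ m n : ℕ, 1 ≤ m → 1 ≤ n → ⟪e m, e n⟫ = if m = n then (m : ℂ) else 0

def HasToeplitzMatrix (e : ℕ → H) (T : H →L[ℂ] H) (c : ℤ → ℂ) : Prop :=
  ∀ m n : ℕ, 1 ≤ m → 1 ≤ n → ⟪e m, T (e n)⟫ = (m : ℂ) * c ((m : ℤ) - n)

variable {e : ℕ → H} {T : H →L[ℂ] H} {c : ℤ → ℂ} {w : ℂ}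

theorem IsDirichletOrthogonal.norm_apply_succ_le (he : IsDirichletOrthogonal e) (n : ℕ) :
    ‖e (n + 1)‖ ≤ n + 1 :=
  norm_le_of_inner_self_eq (by rw [he _ _ le_add_self le_add_self, if_pos rfl]; push_cast; rfl)
    (by linarith [n.cast_nonneg (α := ℝ)])

theorem IsDirichletOrthogonal.hasToeplitzMatrix_id (he : IsDirichletOrthogonal e) :
    HasToeplitzMatrix e (ContinuousLinearMap.id ℂ H) fun k => if k = 0 then 1 else 0 := by
  intro m n hm hn
  rw [ContinuousLinearMap.id_apply, he m n hm hn]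
  by_cases hmn : m = n
  · simp [hmn]
  · simp [hmn, sub_eq_zero]

theorem HasToeplitzMatrix.inner_apply_succ (hT : HasToeplitzMatrix e T c) (m n : ℕ) :
    ⟪e (m + 1), T (e (n + 1))⟫ = ((m : ℂ) + 1) * c ((m : ℤ) - n) := by
  rw [hT _ _ le_add_self le_add_self]
  push_cast
  rw [add_sub_add_right_eq_sub]

theorem HasToeplitzMatrix.norm_coeff_sub_le (he : IsDirichletOrthogonal e)
    (hT : HasToeplitzMatrix e T c) (m n : ℕ) : ‖c ((m : ℤ) - n)‖ ≤ ‖T‖ * (n + 1) := by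
  have hm : (0 : ℝ) < m + 1 := by positivity
  refine le_of_mul_le_mul_left ?_ hm
  calc ((m : ℝ) + 1) * ‖c ((m : ℤ) - n)‖ = ‖⟪e (m + 1), T (e (n + 1))⟫‖ := by
        rw [hT.inner_apply_succ, norm_mul]
        norm_cast
    _ ≤ ‖e (m + 1)‖ * (‖T‖ * ‖e (n + 1)‖) :=
        (norm_inner_le_norm _ _).trans (by gcongr; exact T.le_opNorm _)
    _ ≤ (m + 1) * (‖T‖ * (n + 1)) := by
        gcongr
        exacts [he.norm_apply_succ_le m, he.norm_apply_succ_le n]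

theorem HasToeplitzMatrix.norm_coeff_natCast_le (he : IsDirichletOrthogonal e)
    (hT : HasToeplitzMatrix e T c) (k : ℕ) : ‖c k‖ ≤ ‖T‖ := by
  simpa using hT.norm_coeff_sub_le he k 0

theorem HasToeplitzMatrix.norm_coeff_neg_le (he : IsDirichletOrthogonal e)
    (hT : HasToeplitzMatrix e T c) (k : ℕ) : ‖c (-k)‖ ≤ ‖T‖ * (k + 1) := by
  simpa using hT.norm_coeff_sub_le he 0 k

theorem HasToeplitzMatrix.summable_norm_succ_mul_coeff_mul_pow (he : IsDirichletOrthogonal e)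
    (hT : HasToeplitzMatrix e T c) (hw : ‖w‖ < 1) :
    Summable fun k : ℕ => ‖((k : ℂ) + 1) * c ((k : ℤ) + 1) * w ^ k‖ := by
  refine .of_nonneg_of_le (fun _ => norm_nonneg _) (fun k => ?_)
    ((summable_natCast_add_one_mul_pow (norm_nonneg w) hw).mul_left ‖T‖)
  rw [norm_mul, norm_mul, norm_pow, mul_right_comm, mul_comm ‖T‖]
  norm_cast
  gcongr
  exact_mod_cast hT.norm_coeff_natCast_le he (k + 1)

theorem HasToeplitzMatrix.summable_norm_coeff_mul_pow (he : IsDirichletOrthogonal e)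
    (hT : HasToeplitzMatrix e T c) (hw : ‖w‖ < 1) :
    Summable fun k : ℕ => ‖c ((k : ℤ) + 1) * w ^ (k + 1)‖ := by
  refine .of_nonneg_of_le (fun _ => norm_nonneg _) (fun k => ?_)
    ((summable_geometric_of_lt_one (norm_nonneg w) hw).mul_left (‖T‖ * ‖w‖))
  rw [norm_mul, norm_pow, mul_assoc, ← pow_succ']
  gcongr
  exact_mod_cast hT.norm_coeff_natCast_le he (k + 1)

theorem HasToeplitzMatrix.summable_norm_coeff_neg_mul_conj_pow (he : IsDirichletOrthogonal e)
    (hT : HasToeplitzMatrix e T c) (hw : ‖w‖ < 1) :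
    Summable fun k : ℕ => ‖c (-(k : ℤ)) * conj w ^ k‖ := by
  refine .of_nonneg_of_le (fun _ => norm_nonneg _) (fun k => ?_)
    ((summable_natCast_add_one_mul_pow (norm_nonneg w) hw).mul_left ‖T‖)
  rw [norm_mul, norm_pow, Complex.norm_conj, ← mul_assoc]
  gcongr
  exact hT.norm_coeff_neg_le he k

theorem HasToeplitzMatrix.summable_berezinTerm (he : IsDirichletOrthogonal e)
    (hT : HasToeplitzMatrix e T c) (hw : ‖w‖ < 1) : Summable (berezinTerm c w) := by
  have hgeo := summable_natCast_add_one_mul_pow (norm_nonneg w) hw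
  refine .of_norm_bounded (hgeo.mul_of_nonneg (hgeo.mul_left ‖T‖) (fun _ => by positivity)
    (fun _ => by positivity)) fun p => ?_
  have hcoeff := hT.norm_coeff_sub_le he p.1 p.2
  have ha := norm_kernelCoeff_le hw.le
  rw [berezinTerm, norm_mul, norm_mul, norm_mul, Complex.norm_conj]
  calc ‖kernelCoeff w p.1‖ * ‖kernelCoeff w p.2‖ * (‖(p.1 : ℂ) + 1‖ * ‖c (p.1 - p.2)‖)
      ≤ ‖w‖ ^ p.1 * ‖w‖ ^ p.2 * ((p.1 + 1) * (‖T‖ * (p.2 + 1))) := by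
        gcongr
        · exact ha p.1
        · exact ha p.2
        · exact_mod_cast (Complex.norm_natCast (p.1 + 1)).le
    _ = (p.1 + 1) * ‖w‖ ^ p.1 * (‖T‖ * ((p.2 + 1) * ‖w‖ ^ p.2)) := by ring

theorem IsDirichletOrthogonal.summable_kernelCoeff_smul [CompleteSpace H]
    (he : IsDirichletOrthogonal e) (hw : ‖w‖ < 1) :
    Summable fun n => kernelCoeff w n • e (n + 1) := by
  refine .of_norm_bounded (summable_natCast_add_one_mul_pow (norm_nonneg w) hw) fun n => ?_
  rw [norm_smul, mul_comm]
  gcongr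
  exacts [he.norm_apply_succ_le n, norm_kernelCoeff_le hw.le n]

theorem HasToeplitzMatrix.inner_etilde_apply_etilde_eq_tsum [CompleteSpace H]
    (he : IsDirichletOrthogonal e) (hT : HasToeplitzMatrix e T c) (hw : ‖w‖ < 1) :
    ⟪etilde e w, T (etilde e w)⟫ = ∑' m, ∑' n, berezinTerm c w (m, n) := by
  have hsum := he.summable_kernelCoeff_smul hw
  refine (inner_tsum_apply_tsum T hsum hsum).trans (tsum_congr fun m => tsum_congr fun n => ?_)
  rw [map_smul, inner_smul_left, inner_smul_right, hT.inner_apply_succ, berezinTerm, mul_assoc]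

theorem HasToeplitzMatrix.inner_etilde_apply_etilde [CompleteSpace H]
    (he : IsDirichletOrthogonal e) (hT : HasToeplitzMatrix e T c) (hw : ‖w‖ < 1) :
    ⟪etilde e w, T (etilde e w)⟫
      = w * ((1 - ‖w‖ ^ 2 : ℝ) : ℂ) * (∑' k : ℕ, ((k : ℂ) + 1) * c ((k : ℤ) + 1) * w ^ k)
        + (∑' k : ℕ, c ((k : ℤ) + 1) * w ^ (k + 1))
        + ∑' k : ℕ, c (-(k : ℤ)) * conj w ^ k := by
  rw [hT.inner_etilde_apply_etilde_eq_tsum he hw,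
    tsum_tsum_eq_tsum_below_diagonal_add_tsum_above_diagonal (hT.summable_berezinTerm he hw),
    tsum_congr (tsum_berezinTerm_below_diagonal c hw),
    tsum_congr (tsum_berezinTerm_above_diagonal c hw),
    Summable.tsum_add ((hT.summable_norm_succ_mul_coeff_mul_pow he hw).of_norm.mul_left _)
      (hT.summable_norm_coeff_mul_pow he hw).of_norm,
    tsum_mul_left, mul_comm w]

theorem IsDirichletOrthogonal.norm_etilde [CompleteSpace H] (he : IsDirichletOrthogonal e)
    (hw : ‖w‖ < 1) : ‖etilde e w‖ = 1 := by
  have hself := he.hasToeplitzMatrix_id.inner_etilde_apply_etilde he hw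
  have hsucc (k : ℕ) : (k : ℤ) + 1 ≠ 0 := by omega
  simp only [ContinuousLinearMap.id_apply, inner_self_eq_norm_sq_to_K, hsucc, if_false,
    mul_zero, zero_mul, tsum_zero, add_zero, zero_add, neg_eq_zero, Nat.cast_eq_zero, ite_mul,
    one_mul, pow_zero, tsum_ite_eq] at hself
  exact (pow_eq_one_iff_of_nonneg (norm_nonneg _) two_ne_zero).mp
    (Complex.ofReal_injective (by push_cast; exact hself))

end ToeplitzMatrix

theorem statement15_general {H : Type*} [NormedAddCommGroup H] [InnerProductSpace ℂ H]
    [CompleteSpace H]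
    (e : ℕ → H)
    (horth : ∀ m n : ℕ, 1 ≤ m → 1 ≤ n → ⟪e m, e n⟫ = if m = n then (m : ℂ) else 0)
    (T : H →L[ℂ] H) (c : ℤ → ℂ)
    (hT : ∀ m n : ℕ, 1 ≤ m → 1 ≤ n → ⟪e m, T (e n)⟫ = (m : ℂ) * c ((m : ℤ) - n)) :
    ∀ w ∈ Metric.ball (0 : ℂ) 1,
      -- the series defining `ẽ_w` converges in `H`, and `ẽ_w` is a unit vector
      Summable (fun n : ℕ => ((((1 - ‖w‖ ^ 2 : ℝ) : ℂ)) * (conj w) ^ n) • e (n + 1)) ∧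
      ‖etilde e w‖ = 1 ∧
      -- the three series below are absolutely convergent
      Summable (fun k : ℕ => ‖((k : ℂ) + 1) * c ((k : ℤ) + 1) * w ^ k‖) ∧
      Summable (fun k : ℕ => ‖c ((k : ℤ) + 1) * w ^ (k + 1)‖) ∧
      Summable (fun k : ℕ => ‖c (-(k : ℤ)) * (conj w) ^ k‖) ∧
      -- the Berezin-type formula `⟨T ẽ_w, ẽ_w⟩ = w(1−|w|²)·Σ k c(k) w^(k−1) + Σ c(k) w^k + Σ c(−k) conj(w)^k`
      ⟪etilde e w, T (etilde e w)⟫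
        = w * (((1 - ‖w‖ ^ 2 : ℝ) : ℂ)) * (∑' k : ℕ, ((k : ℂ) + 1) * c ((k : ℤ) + 1) * w ^ k)
          + (∑' k : ℕ, c ((k : ℤ) + 1) * w ^ (k + 1))
          + ∑' k : ℕ, c (-(k : ℤ)) * (conj w) ^ k := by
  intro w hw
  have hw : ‖w‖ < 1 := mem_ball_zero_iff.mp hw
  have he : IsDirichletOrthogonal e := horth
  have hT : HasToeplitzMatrix e T c := hT
  exact ⟨he.summable_kernelCoeff_smul hw, he.norm_etilde hw,
    hT.summable_norm_succ_mul_coeff_mul_pow he hw, hT.summable_norm_coeff_mul_pow he hw,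
    hT.summable_norm_coeff_neg_mul_conj_pow he hw, hT.inner_etilde_apply_etilde he hw⟩

theorem statement15 {H : Type*} [NormedAddCommGroup H] [InnerProductSpace ℂ H]
    [CompleteSpace H]
    (e : ℕ → H)
    (horth : ∀ m n : ℕ, 1 ≤ m → 1 ≤ n → ⟪e m, e n⟫ = if m = n then (m : ℂ) else 0)
    (hdense : Dense (Submodule.span ℂ (e '' {n : ℕ | 1 ≤ n}) : Set H))
    (T : H →L[ℂ] H) (c : ℤ → ℂ)
    (hT : ∀ m n : ℕ, 1 ≤ m → 1 ≤ n → ⟪e m, T (e n)⟫ = (m : ℂ) * c ((m : ℤ) - n)) :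
    ∀ w ∈ Metric.ball (0 : ℂ) 1,
      -- the series defining `ẽ_w` converges in `H`, and `ẽ_w` is a unit vector
      Summable (fun n : ℕ => ((((1 - ‖w‖ ^ 2 : ℝ) : ℂ)) * (conj w) ^ n) • e (n + 1)) ∧
      ‖etilde e w‖ = 1 ∧
      -- the three series below are absolutely convergent
      Summable (fun k : ℕ => ‖((k : ℂ) + 1) * c ((k : ℤ) + 1) * w ^ k‖) ∧
      Summable (fun k : ℕ => ‖c ((k : ℤ) + 1) * w ^ (k + 1)‖) ∧
      Summable (fun k : ℕ => ‖c (-(k : ℤ)) * (conj w) ^ k‖) ∧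
      -- the Berezin-type formula `⟨T ẽ_w, ẽ_w⟩ = w(1−|w|²)·Σ k c(k) w^(k−1) + Σ c(k) w^k + Σ c(−k) conj(w)^k`
      ⟪etilde e w, T (etilde e w)⟫
        = w * (((1 - ‖w‖ ^ 2 : ℝ) : ℂ)) * (∑' k : ℕ, ((k : ℂ) + 1) * c ((k : ℤ) + 1) * w ^ k)
          + (∑' k : ℕ, c ((k : ℤ) + 1) * w ^ (k + 1))
          + ∑' k : ℕ, c (-(k : ℤ)) * (conj w) ^ k :=
  statement15_general e horth T c hT
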